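/- Let x be a strategy profile of a multi-leader congestion game with an adversary, let i and j be players with x_i ≠ x_j and ℓ_{x_i}(x) ≥ ℓ_{x_j}(x), and let r be a resource with r ≠ x_i and r ≠ x_j. Write M = M(x). Then π_i(r, x_{−i}) ≠ π_j(r, x_{−j}) if and only if one of the following two cases holds: (1) ℓ_r(x) = M − 1, ℓ_{x_i}(x) = M, and ℓ_{x_j}(x) < M; or (2) ℓ_r(x) = M − 2 and x_i is the only resource with load M in x. -/
import Mathlib


open Finset

variable {ι : Type*} {m : ℕ}

/-- The load of resource `r` under strategy profile `x`. -/
def load [Fintype ι] [DecidableEq ι] (x : ι → Fin m) (r : Fin m) : ℕ :=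
  (Finset.univ.filter (fun i => x i = r)).card

/-- The maximum load `M(x)`. -/
def maxLoad [Fintype ι] [DecidableEq ι] (x : ι → Fin m) : ℕ :=
  Finset.univ.sup (fun r => load x r)

/-- The number `p(x)` of resources with maximum load. -/
def numMax [Fintype ι] [DecidableEq ι] (x : ι → Fin m) : ℕ :=
  (Finset.univ.filter (fun r => load x r = maxLoad x)).card

/-- The attack term `κ*_r(x)`. -/
noncomputable def kappa [Fintype ι] [DecidableEq ι] (B : ℝ) (x : ι → Fin m) (r : Fin m) : ℝ :=
  if load x r = maxLoad x then B / (numMax x : ℝ) else 0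

/-- The cost `c_r(x)` of resource `r` under profile `x`. -/
noncomputable def rcost [Fintype ι] [DecidableEq ι] (a : Fin m → ℝ) (B : ℝ)
    (x : ι → Fin m) (r : Fin m) : ℝ :=
  a r * (load x r : ℝ) + kappa B x r

/-- The private cost `π_i(x)` of player `i` under profile `x`. -/
noncomputable def pcost [Fintype ι] [DecidableEq ι] (a : Fin m → ℝ) (B : ℝ)
    (x : ι → Fin m) (i : ι) : ℝ :=
  rcost a B x (x i)

/-- `x` is an `α`-approximate pure Nash equilibrium. -/
def isApproxPNE [Fintype ι] [DecidableEq ι] (a : Fin m → ℝ) (B : ℝ) (α : ℝ)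
    (x : ι → Fin m) : Prop :=
  ∀ (i : ι) (r : Fin m), pcost a B x i ≤ α * pcost a B (Function.update x i r) i

/-- `r` is the only resource with maximum load in `x`. -/
def onlyMax [Fintype ι] [DecidableEq ι] (x : ι → Fin m) (r : Fin m) : Prop :=
  load x r = maxLoad x ∧ ∀ s : Fin m, load x s = maxLoad x → s = r

lemma load_le_maxLoad [Fintype ι] [DecidableEq ι] (x : ι → Fin m) (r : Fin m) :
    load x r ≤ maxLoad x :=
  Finset.le_sup (Finset.mem_univ r)

lemma maxLoad_le [Fintype ι] [DecidableEq ι] (x : ι → Fin m) (v : ℕ)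
    (h : ∀ s, load x s ≤ v) : maxLoad x ≤ v :=
  Finset.sup_le fun s _ => h s

lemma one_le_load [Fintype ι] [DecidableEq ι] (x : ι → Fin m) (i : ι) :
    1 ≤ load x (x i) :=
  Finset.card_pos.mpr ⟨i, Finset.mem_filter.mpr ⟨Finset.mem_univ i, rfl⟩⟩

lemma load_update_self [Fintype ι] [DecidableEq ι] (x : ι → Fin m) (i : ι) (r : Fin m)
    (h : x i ≠ r) : load (Function.update x i r) r = load x r + 1 := by
  unfold load
  have he : Finset.univ.filter (fun k => Function.update x i r k = r)
      = insert i (Finset.univ.filter (fun k => x k = r)) := by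
    ext k
    rcases eq_or_ne k i with rfl | hk
    · simp
    · simp [Function.update_of_ne hk, hk]
  rw [he, Finset.card_insert_of_notMem (by simp [h])]

lemma load_update_old [Fintype ι] [DecidableEq ι] (x : ι → Fin m) (i : ι) (r : Fin m)
    (h : x i ≠ r) : load (Function.update x i r) (x i) + 1 = load x (x i) := by
  unfold load
  have he : Finset.univ.filter (fun k => Function.update x i r k = x i)
      = (Finset.univ.filter (fun k => x k = x i)).erase i := by
    ext k
    rcases eq_or_ne k i with rfl | hk
    · simp [Ne.symm h]
    · simp [Function.update_of_ne hk, hk]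
  rw [he, Finset.card_erase_add_one (by simp)]

lemma load_update_other [Fintype ι] [DecidableEq ι] (x : ι → Fin m) (i : ι) (r s : Fin m)
    (h1 : s ≠ r) (h2 : s ≠ x i) : load (Function.update x i r) s = load x s := by
  unfold load
  congr 1
  ext k
  rcases eq_or_ne k i with rfl | hk
  · simp [Ne.symm h1, Ne.symm h2]
  · simp [Function.update_of_ne hk]

lemma numMax_pos [Fintype ι] [DecidableEq ι] (x : ι → Fin m) (t : Fin m)
    (h : load x t = maxLoad x) : 0 < numMax x :=
  Finset.card_pos.mpr ⟨t, Finset.mem_filter.mpr ⟨Finset.mem_univ t, h⟩⟩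

lemma kappa_eq_zero_of_lt [Fintype ι] [DecidableEq ι] (B : ℝ) (x : ι → Fin m) (r t : Fin m)
    (h : load x r < load x t) : kappa B x r = 0 := by
  have h2 := load_le_maxLoad x t
  exact if_neg (by omega)

lemma div_cast_ne (B : ℝ) (hB : 0 < B) {p q : ℕ} :
    B / (p : ℝ) ≠ B / (q : ℝ) ↔ ¬ p = q := by
  constructor
  · intro h heq; exact h (by rw [heq])
  · intro h heq
    rcases Nat.eq_zero_or_pos p with hp | hp
    · rcases Nat.eq_zero_or_pos q with hq | hq
      · exact h (hp.trans hq.symm)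
      · rw [hp] at heq
        simp only [Nat.cast_zero, div_zero] at heq
        have : (0:ℝ) < B / q := div_pos hB (by exact_mod_cast hq)
        linarith
    · rcases Nat.eq_zero_or_pos q with hq | hq
      · rw [hq] at heq
        simp only [Nat.cast_zero, div_zero] at heq
        have : (0:ℝ) < B / p := div_pos hB (by exact_mod_cast hp)
        linarith
      · rw [div_eq_div_iff (by positivity) (by positivity)] at heq
        have h2 : (q:ℝ) = p := mul_left_cancel₀ hB.ne' heq
        exact h (by exact_mod_cast h2.symm)

/-- When `load x r + 1 = maxLoad x`, moving player `i` (with `x i ≠ r`) to `r` makes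
`r` a maximum-load resource, and the attack term has an explicit value. -/
lemma kappa_update_max [Fintype ι] [DecidableEq ι] (B : ℝ) (x : ι → Fin m) (i : ι)
    (r : Fin m) (hxir : x i ≠ r) (hc : load x r + 1 = maxLoad x) :
    kappa B (Function.update x i r) r
      = B / ((((Finset.univ.filter (fun s => load x s = maxLoad x)).erase (x i)).card
          + 1 : ℕ) : ℝ) := by
  set y := Function.update x i r with hy
  have hyr : load y r = load x r + 1 := load_update_self x i r hxir
  have hyxi : load y (x i) + 1 = load x (x i) := load_update_old x i r hxir
  have hLiM : load x (x i) ≤ maxLoad x := load_le_maxLoad x (x i)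
  have hyo : ∀ s, s ≠ r → s ≠ x i → load y s = load x s :=
    fun s h1 h2 => load_update_other x i r s h1 h2
  have hymax : maxLoad y = maxLoad x := by
    apply le_antisymm
    · apply maxLoad_le
      intro s
      rcases eq_or_ne s r with rfl | hsr
      · omega
      rcases eq_or_ne s (x i) with rfl | hsi
      · omega
      · rw [hyo s hsr hsi]; exact load_le_maxLoad x s
    · calc maxLoad x = load y r := by omega
        _ ≤ maxLoad y := load_le_maxLoad y r
  have hfy : Finset.univ.filter (fun s => load y s = maxLoad y)
      = insert r ((Finset.univ.filter (fun s => load x s = maxLoad x)).erase (x i)) := by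
    rw [hymax]
    ext s
    simp only [Finset.mem_filter, Finset.mem_univ, true_and, Finset.mem_insert,
      Finset.mem_erase]
    rcases eq_or_ne s r with rfl | hsr
    · simp [hyr, hc]
    rcases eq_or_ne s (x i) with rfl | hsi
    · have h1 : load y (x i) ≠ maxLoad x := by omega
      simp [h1, hxir]
    · rw [hyo s hsr hsi]
      simp [hsr, hsi]
  have hrnot : r ∉ (Finset.univ.filter (fun s => load x s = maxLoad x)).erase (x i) := by
    simp only [Finset.mem_erase, Finset.mem_filter, Finset.mem_univ, true_and]
    rintro ⟨-, h⟩; omega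
  have hnum : numMax y
      = ((Finset.univ.filter (fun s => load x s = maxLoad x)).erase (x i)).card + 1 := by
    unfold numMax
    rw [hfy, Finset.card_insert_of_notMem hrnot]
  have hmem : load y r = maxLoad y := by omega
  unfold kappa
  rw [if_pos hmem, hnum]

/-- When `load x r = maxLoad x`, moving player `i` (with `x i ≠ r`) to `r` makes `r`
the unique maximum-load resource, so the attack term is the full budget. -/
lemma kappa_update_overmax [Fintype ι] [DecidableEq ι] (B : ℝ) (x : ι → Fin m) (i : ι)
    (r : Fin m) (hxir : x i ≠ r) (hc : load x r = maxLoad x) :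
    kappa B (Function.update x i r) r = B := by
  set y := Function.update x i r with hy
  have hyr : load y r = load x r + 1 := load_update_self x i r hxir
  have hyxi : load y (x i) + 1 = load x (x i) := load_update_old x i r hxir
  have hLiM : load x (x i) ≤ maxLoad x := load_le_maxLoad x (x i)
  have hyo : ∀ s, s ≠ r → s ≠ x i → load y s = load x s :=
    fun s h1 h2 => load_update_other x i r s h1 h2
  have hymax : maxLoad y = maxLoad x + 1 := by
    apply le_antisymm
    · apply maxLoad_le
      intro s
      rcases eq_or_ne s r with rfl | hsr
      · omega
      rcases eq_or_ne s (x i) with rfl | hsi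
      · omega
      · rw [hyo s hsr hsi]; exact le_trans (load_le_maxLoad x s) (Nat.le_succ _)
    · calc maxLoad x + 1 = load y r := by omega
        _ ≤ maxLoad y := load_le_maxLoad y r
  have hfy : Finset.univ.filter (fun s => load y s = maxLoad y) = {r} := by
    ext s
    simp only [Finset.mem_filter, Finset.mem_univ, true_and, Finset.mem_singleton]
    rcases eq_or_ne s r with rfl | hsr
    · simp [hyr, hymax, hc]
    rcases eq_or_ne s (x i) with rfl | hsi
    · have h1 : load y (x i) ≠ maxLoad y := by omega
      simp [h1, hxir]
    · have h2 := load_le_maxLoad x s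
      have h1 : load y s ≠ maxLoad y := by rw [hyo s hsr hsi]; omega
      simp [h1, hsr]
  have hnum : numMax y = 1 := by
    unfold numMax
    rw [hfy, Finset.card_singleton]
  have hmem : load y r = maxLoad y := by omega
  unfold kappa
  rw [if_pos hmem, hnum]
  simp

/-- characterization of when the deviation costs of two players
for a common resource r differ. -/
theorem deviation_cost_ne_iff (n m : ℕ) (a : Fin m → ℝ) (ha : ∀ r, 0 ≤ a r)
    (B : ℝ) (hB : 0 < B) (x : Fin n → Fin m) (i j : Fin n)
    (hij : x i ≠ x j) (hload : load x (x j) ≤ load x (x i))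
    (r : Fin m) (hri : r ≠ x i) (hrj : r ≠ x j) :
    pcost a B (Function.update x i r) i ≠ pcost a B (Function.update x j r) j ↔
      ((load x r + 1 = maxLoad x ∧ load x (x i) = maxLoad x ∧
          load x (x j) < maxLoad x) ∨
       (load x r + 2 = maxLoad x ∧ onlyMax x (x i))) := by
  have hxir : x i ≠ r := Ne.symm hri
  have hxjr : x j ≠ r := Ne.symm hrj
  set y := Function.update x i r with hy
  set z := Function.update x j r with hz
  have hyr : load y r = load x r + 1 := load_update_self x i r hxir
  have hzr : load z r = load x r + 1 := load_update_self x j r hxjr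
  have hyxi : load y (x i) + 1 = load x (x i) := load_update_old x i r hxir
  have hzxj : load z (x j) + 1 = load x (x j) := load_update_old x j r hxjr
  have hyo : ∀ s, s ≠ r → s ≠ x i → load y s = load x s :=
    fun s h1 h2 => load_update_other x i r s h1 h2
  have hzo : ∀ s, s ≠ r → s ≠ x j → load z s = load x s :=
    fun s h1 h2 => load_update_other x j r s h1 h2
  have hLrM : load x r ≤ maxLoad x := load_le_maxLoad x r
  have hLiM : load x (x i) ≤ maxLoad x := load_le_maxLoad x (x i)
  have hLjM : load x (x j) ≤ maxLoad x := load_le_maxLoad x (x j)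
  have hLi1 : 1 ≤ load x (x i) := one_le_load x i
  have hLj1 : 1 ≤ load x (x j) := one_le_load x j
  have hpy : pcost a B y i = a r * ((load x r : ℝ) + 1) + kappa B y r := by
    have h1 : y i = r := Function.update_self i r x
    simp only [pcost, rcost, h1, hyr]
    push_cast
    ring
  have hpz : pcost a B z j = a r * ((load x r : ℝ) + 1) + kappa B z r := by
    have h1 : z j = r := Function.update_self j r x
    simp only [pcost, rcost, h1, hzr]
    push_cast
    ring
  rw [hpy, hpz, ne_eq, add_right_inj]
  rcases lt_trichotomy (load x r + 1) (maxLoad x) with hc | hc | hc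
  · -- load x r + 1 < maxLoad x
    by_cases hOnly : onlyMax x (x i)
    · obtain ⟨hLi, huniq⟩ := hOnly
      -- kappa z r = 0 since x i still has maximal load in z
      have hzxi : load z (x i) = load x (x i) := hzo (x i) hxir hij
      have hkz : kappa B z r = 0 :=
        kappa_eq_zero_of_lt B z r (x i) (by omega)
      -- maxLoad y = maxLoad x - 1
      have hymax : maxLoad y = maxLoad x - 1 := by
        apply le_antisymm
        · apply maxLoad_le
          intro s
          rcases eq_or_ne s r with rfl | hsr
          · omega
          rcases eq_or_ne s (x i) with rfl | hsi
          · omega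
          · have h2 := load_le_maxLoad x s
            have h3 : load x s ≠ maxLoad x := fun h => hsi (huniq s h)
            rw [hyo s hsr hsi]; omega
        · calc maxLoad x - 1 = load y (x i) := by omega
            _ ≤ maxLoad y := load_le_maxLoad y (x i)
      by_cases hL2 : load x r + 2 = maxLoad x
      · have h1 : load y r = maxLoad y := by omega
        have hpos : 0 < numMax y := numMax_pos y r h1
        have hky : kappa B y r = B / (numMax y : ℝ) := if_pos h1
        constructor
        · intro _
          exact Or.inr ⟨hL2, hLi, huniq⟩
        · intro _
          rw [hky, hkz]
          exact ne_of_gt (div_pos hB (by exact_mod_cast hpos))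
      · have hky : kappa B y r = 0 := if_neg (by omega)
        rw [hky, hkz]
        constructor
        · intro h; exact absurd rfl h
        · rintro (⟨h1, -, -⟩ | ⟨h1, -⟩)
          · exact absurd h1 (by omega)
          · exact absurd h1 hL2
    · by_cases hLi : load x (x i) = maxLoad x
      · -- not the only max: some other resource also has max load
        have hex : ∃ s, load x s = maxLoad x ∧ s ≠ x i := by
          by_contra h
          push_neg at h
          exact hOnly ⟨hLi, h⟩
        obtain ⟨s, hs, hsxi⟩ := hex
        have hsr : s ≠ r := fun h => by rw [h] at hs; omega
        have hky : kappa B y r = 0 := by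
          have h1 : load y s = load x s := hyo s hsr hsxi
          exact kappa_eq_zero_of_lt B y r s (by omega)
        have hkz : kappa B z r = 0 := by
          have h1 : load z (x i) = load x (x i) := hzo (x i) hxir hij
          exact kappa_eq_zero_of_lt B z r (x i) (by omega)
        rw [hky, hkz]
        constructor
        · intro h; exact absurd rfl h
        · rintro (⟨h1, -, -⟩ | ⟨-, h2⟩)
          · exact absurd h1 (by omega)
          · exact absurd h2 hOnly
      · -- load x (x i) < maxLoad x; take any resource of maximal load
        obtain ⟨s, -, hs⟩ := Finset.exists_mem_eq_sup (Finset.univ : Finset (Fin m))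
          ⟨r, Finset.mem_univ r⟩ (fun t => load x t)
        have hs' : maxLoad x = load x s := hs
        have hsr : s ≠ r := fun h => by rw [h] at hs'; omega
        have hsi : s ≠ x i := fun h => by rw [h] at hs'; omega
        have hsj : s ≠ x j := fun h => by rw [h] at hs'; omega
        have hky : kappa B y r = 0 := by
          have h1 : load y s = load x s := hyo s hsr hsi
          exact kappa_eq_zero_of_lt B y r s (by omega)
        have hkz : kappa B z r = 0 := by
          have h1 : load z s = load x s := hzo s hsr hsj
          exact kappa_eq_zero_of_lt B z r s (by omega)
        rw [hky, hkz]
        constructor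
        · intro h; exact absurd rfl h
        · rintro (⟨-, h1, -⟩ | ⟨-, h2, -⟩)
          · exact absurd h1 hLi
          · exact absurd h2 hLi
  · -- load x r + 1 = maxLoad x
    have hky := kappa_update_max B x i r hxir hc
    have hkz := kappa_update_max B x j r hxjr hc
    rw [← hy] at hky
    rw [← hz] at hkz
    rw [hky, hkz, ← ne_eq, div_cast_ne B hB]
    set P := Finset.univ.filter (fun s => load x s = maxLoad x) with hP
    by_cases hLieq : load x (x i) = maxLoad x
    · have hximem : x i ∈ P := Finset.mem_filter.mpr ⟨Finset.mem_univ _, hLieq⟩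
      have hp1 : 1 ≤ P.card := Finset.card_pos.mpr ⟨x i, hximem⟩
      have hci : (P.erase (x i)).card = P.card - 1 := Finset.card_erase_of_mem hximem
      by_cases hLjeq : load x (x j) = maxLoad x
      · have hxjmem : x j ∈ P := Finset.mem_filter.mpr ⟨Finset.mem_univ _, hLjeq⟩
        have hcj : (P.erase (x j)).card = P.card - 1 := Finset.card_erase_of_mem hxjmem
        rw [hci, hcj]
        constructor
        · intro h; exact absurd rfl h
        · rintro (⟨-, -, h1⟩ | ⟨h1, -⟩) <;> omega
      · have hxjnm : x j ∉ P := fun h => hLjeq (Finset.mem_filter.mp h).2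
        have hcj : P.erase (x j) = P := Finset.erase_eq_of_notMem hxjnm
        rw [hci, hcj]
        constructor
        · intro _
          exact Or.inl ⟨hc, hLieq, by omega⟩
        · intro _
          omega
    · have hLjeq : load x (x j) ≠ maxLoad x := by omega
      have hxinm : x i ∉ P := fun h => hLieq (Finset.mem_filter.mp h).2
      have hxjnm : x j ∉ P := fun h => hLjeq (Finset.mem_filter.mp h).2
      rw [Finset.erase_eq_of_notMem hxinm, Finset.erase_eq_of_notMem hxjnm]
      constructor
      · intro h; exact absurd rfl h
      · rintro (⟨-, h1, -⟩ | ⟨h1, -⟩)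
        · exact absurd h1 hLieq
        · exact absurd h1 (by omega)
  · -- maxLoad x < load x r + 1, i.e. load x r = maxLoad x
    have hLM : load x r = maxLoad x := by omega
    have hky := kappa_update_overmax B x i r hxir hLM
    have hkz := kappa_update_overmax B x j r hxjr hLM
    rw [← hy] at hky
    rw [← hz] at hkz
    rw [hky, hkz]
    constructor
    · intro h; exact absurd rfl h
    · rintro (⟨h1, -, -⟩ | ⟨h1, -⟩) <;> exact absurd h1 (by omega)
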